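/- arXiv:1702.03983 — 3 statements merged into one kernel-verified Lean document; each statement's English description precedes it below -/
import Mathlib

section
/- The double sum over all pairs of coprime positive integers d, t of μ(d)μ(t)/(d²t²) equals the Euler product over all primes p of (1 - 2/p²). -/
set_option maxHeartbeats 1000000

open ArithmeticFunction

noncomputable def Gfun : ℕ × ℕ → ℝ := fun x =>
  if Nat.gcd x.1 x.2 = 1 then ((moebius x.1 : ℝ) * (moebius x.2 : ℝ)) / ((x.1 : ℝ) ^ 2 * (x.2 : ℝ) ^ 2) else 0

noncomputable def Ffun : ℕ → ℝ := fun n => (moebius n : ℝ) * (n.divisors.card : ℝ) / (n : ℝ) ^ 2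

lemma Gfun_zero_left (t : ℕ) : Gfun (0, t) = 0 := by
  simp [Gfun]

lemma Gfun_zero_right (d : ℕ) : Gfun (d, 0) = 0 := by
  simp [Gfun]

lemma abs_moebius_real_le_one (n : ℕ) : |(moebius n : ℝ)| ≤ 1 := by
  have := ArithmeticFunction.abs_moebius_le_one (n := n)
  calc |(moebius n : ℝ)| = ((|moebius n| : ℤ) : ℝ) := by push_cast; ring
  _ ≤ 1 := by exact_mod_cast this

lemma summable_Gfun_bound :
    Summable (fun x : ℕ × ℕ => (1 / (x.1 : ℝ) ^ 2) * (1 / (x.2 : ℝ) ^ 2)) := by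
  have hb : Summable (fun n : ℕ => 1 / (n : ℝ) ^ 2) :=
    Real.summable_one_div_nat_pow.mpr one_lt_two
  have hnn : (0 : ℕ → ℝ) ≤ (fun n : ℕ => 1 / (n : ℝ) ^ 2) := fun n => by positivity
  exact hb.mul_of_nonneg hb hnn hnn

lemma Gfun_norm_le (x : ℕ × ℕ) :
    ‖Gfun x‖ ≤ (1 / (x.1 : ℝ) ^ 2) * (1 / (x.2 : ℝ) ^ 2) := by
  rcases x with ⟨d, t⟩
  rcases Nat.eq_zero_or_pos d with rfl | hd
  · rw [Gfun_zero_left]; simp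
  rcases Nat.eq_zero_or_pos t with rfl | ht
  · rw [Gfun_zero_right]; simp
  have hD : (0:ℝ) < (d:ℝ)^2 * (t:ℝ)^2 := by positivity
  simp only [Gfun]
  split_ifs with h
  · calc ‖((moebius d : ℝ) * moebius t) / ((d:ℝ)^2 * (t:ℝ)^2)‖
        = |(moebius d : ℝ) * moebius t| / ((d:ℝ)^2 * (t:ℝ)^2) := by
          rw [Real.norm_eq_abs, abs_div, abs_of_pos hD]
      _ ≤ 1 / ((d:ℝ)^2 * (t:ℝ)^2) := by
          gcongr
          rw [abs_mul]
          exact mul_le_one₀ (abs_moebius_real_le_one d) (abs_nonneg _) (abs_moebius_real_le_one t)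
      _ = (1 / (d:ℝ)^2) * (1 / (t:ℝ)^2) := by rw [one_div_mul_one_div]
  · simp
    positivity

lemma summable_Gfun : Summable Gfun :=
  Summable.of_norm_bounded summable_Gfun_bound Gfun_norm_le

lemma card_divisorsAntidiagonal' (n : ℕ) : n.divisorsAntidiagonal.card = n.divisors.card := by
  rw [← Nat.image_fst_divisorsAntidiagonal]
  refine (Finset.card_image_of_injOn ?_).symm
  intro x hx y hy hxy
  simp only [Finset.mem_coe, Nat.mem_divisorsAntidiagonal] at hx hy
  have hx1 : x.1 ≠ 0 := by rintro h; rw [h, zero_mul] at hx; exact hx.2 hx.1.symm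
  have : x.1 * x.2 = x.1 * y.2 := by
    rw [hx.1, hxy]; exact hy.1.symm
  exact Prod.ext hxy (Nat.eq_of_mul_eq_mul_left (Nat.pos_of_ne_zero hx1) this)

lemma fiber_set_eq {n : ℕ} (hn : n ≠ 0) :
    (fun p : ℕ × ℕ => p.1 * p.2) ⁻¹' {n} = ↑n.divisorsAntidiagonal := by
  ext x
  simp [Nat.mem_divisorsAntidiagonal, hn]

lemma Ffun_eq_sum {n : ℕ} (hn : n ≠ 0) :
    ∑ x ∈ n.divisorsAntidiagonal, Gfun x = Ffun n := by
  by_cases hsq : Squarefree n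
  · have : ∀ x ∈ n.divisorsAntidiagonal, Gfun x = (moebius n : ℝ) / (n : ℝ) ^ 2 := by
      intro x hx
      rw [Nat.mem_divisorsAntidiagonal] at hx
      have hcop : Nat.Coprime x.1 x.2 := by
        refine Nat.coprime_of_squarefree_mul ?_
        rw [hx.1]; exact hsq
      simp only [Gfun, if_pos hcop]
      rw [show ((moebius x.1 : ℝ) * moebius x.2) = ((moebius (x.1 * x.2) : ℝ)) by
        rw [isMultiplicative_moebius.map_mul_of_coprime hcop]; push_cast; ring]
      rw [hx.1, ← mul_pow, ← Nat.cast_mul, hx.1]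
    rw [Finset.sum_congr rfl this, Finset.sum_const, card_divisorsAntidiagonal',
      nsmul_eq_mul, Ffun]
    ring
  · have h0 : ∀ x ∈ n.divisorsAntidiagonal, Gfun x = 0 := by
      intro x hx
      rw [Nat.mem_divisorsAntidiagonal] at hx
      simp only [Gfun]
      split_ifs with h
      · have : ¬(Squarefree x.1 ∧ Squarefree x.2) := by
          rw [← Nat.squarefree_mul h, hx.1]; exact hsq
        rcases not_and_or.mp this with h1 | h1
        · rw [moebius_eq_zero_of_not_squarefree h1]; simp
        · rw [moebius_eq_zero_of_not_squarefree h1]; simp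
      · rfl
    rw [Finset.sum_eq_zero h0, Ffun, moebius_eq_zero_of_not_squarefree hsq]
    simp

lemma fiber_tsum (n : ℕ) :
    ∑' x : (fun p : ℕ × ℕ => p.1 * p.2) ⁻¹' {n}, Gfun x = Ffun n := by
  rcases eq_or_ne n 0 with rfl | hn
  · have : ∀ x : (fun p : ℕ × ℕ => p.1 * p.2) ⁻¹' {(0:ℕ)}, Gfun x = 0 := by
      rintro ⟨⟨d, t⟩, hx⟩
      simp only [Set.mem_preimage, Set.mem_singleton_iff] at hx
      rcases Nat.mul_eq_zero.mp hx with rfl | rfl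
      · exact Gfun_zero_left t
      · exact Gfun_zero_right d
    rw [tsum_congr this, tsum_zero]
    simp [Ffun]
  · rw [fiber_set_eq hn, Finset.tsum_subtype' n.divisorsAntidiagonal Gfun, Ffun_eq_sum hn]

lemma fiber_tsum_abs (n : ℕ) :
    ‖Ffun n‖ ≤ ∑' x : (fun p : ℕ × ℕ => p.1 * p.2) ⁻¹' {n}, ‖Gfun x‖ := by
  rcases eq_or_ne n 0 with rfl | hn
  · have : Ffun 0 = 0 := by simp [Ffun]
    rw [this, norm_zero]
    exact tsum_nonneg (fun x => norm_nonneg _)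
  · rw [fiber_set_eq hn, Finset.tsum_subtype' n.divisorsAntidiagonal (fun x => ‖Gfun x‖),
      ← Ffun_eq_sum hn]
    exact norm_sum_le _ _

lemma Ffun_mult {m n : ℕ} (h : Nat.Coprime m n) : Ffun (m * n) = Ffun m * Ffun n := by
  simp only [Ffun]
  rw [isMultiplicative_moebius.map_mul_of_coprime h, h.card_divisors_mul]
  push_cast
  ring

lemma Ffun_one : Ffun 1 = 1 := by simp [Ffun]

lemma Ffun_zero : Ffun 0 = 0 := by simp [Ffun]

lemma summable_norm_Ffun : Summable (fun n : ℕ => ‖Ffun n‖) := by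
  have h1 : Summable (fun x : ℕ × ℕ => ‖Gfun x‖) :=
    Summable.of_nonneg_of_le (fun x => norm_nonneg _) Gfun_norm_le summable_Gfun_bound
  have h2 := h1.hasSum.tsum_fiberwise (fun p : ℕ × ℕ => p.1 * p.2)
  exact Summable.of_nonneg_of_le (fun n => norm_nonneg _) fiber_tsum_abs h2.summable

lemma Ffun_primepow {p : ℕ} (hp : p.Prime) : ∑' e : ℕ, Ffun (p ^ e) = 1 - 2 / (p : ℝ) ^ 2 := by
  have hcard : p.divisors.card = 2 := by
    rw [hp.divisors, Finset.card_insert_of_notMem (by simp [hp.ne_one, Ne.symm hp.ne_one]),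
      Finset.card_singleton]
  rw [tsum_eq_sum (s := ({0, 1} : Finset ℕ)) ?_]
  · rw [Finset.sum_insert (by simp), Finset.sum_singleton]
    rw [pow_zero, pow_one, Ffun_one]
    simp only [Ffun, hcard, moebius_apply_prime hp]
    push_cast
    ring
  · intro e he
    simp only [Finset.mem_insert, Finset.mem_singleton] at he
    push_neg at he
    simp only [Ffun, moebius_apply_prime_pow hp he.1, if_neg he.2]
    simp

lemma pnat_tsum_eq (h : ℕ → ℝ) (h0 : h 0 = 0) : ∑' t : ℕ+, h ↑t = ∑' t : ℕ, h t := by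
  have hs : Function.support h ⊆ {n : ℕ | 0 < n} := by
    intro n hn
    simp only [Set.mem_setOf_eq]
    rcases Nat.eq_zero_or_pos n with rfl | hp
    · exact absurd h0 hn
    · exact hp
  exact tsum_subtype_eq_of_support_subset hs

theorem sum_moebius_coprime_eq_euler_product :
    ∑' d : ℕ+, ∑' t : ℕ+, (if Nat.gcd d t = 1 then
        ((moebius d : ℝ) * (moebius t : ℝ)) / ((d : ℝ) ^ 2 * (t : ℝ) ^ 2) else 0)
      = ∏' p : Nat.Primes, (1 - 2 / (p : ℝ) ^ 2) := by
  have heuler := EulerProduct.eulerProduct_tprod Ffun_one (fun {m n} h => Ffun_mult h)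
    summable_norm_Ffun Ffun_zero
  have hfib := summable_Gfun.hasSum.tsum_fiberwise (fun p : ℕ × ℕ => p.1 * p.2)
  have h3 : ∑' n : ℕ, Ffun n = ∑' x : ℕ × ℕ, Gfun x := by
    rw [← hfib.tsum_eq]
    exact tsum_congr (fun n => (fiber_tsum n).symm)
  have h4 : ∑' x : ℕ × ℕ, Gfun x = ∑' d : ℕ, ∑' t : ℕ, Gfun (d, t) :=
    Summable.tsum_prod' summable_Gfun fun b => summable_Gfun.prod_factor b
  have h5 : ∀ d : ℕ, ∑' t : ℕ+, Gfun (d, ↑t) = ∑' t : ℕ, Gfun (d, t) := fun d =>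
    pnat_tsum_eq (fun t => Gfun (d, t)) (Gfun_zero_right d)
  have h6 : ∑' d : ℕ+, ∑' t : ℕ, Gfun (↑d, t) = ∑' d : ℕ, ∑' t : ℕ, Gfun (d, t) := by
    refine pnat_tsum_eq (fun d => ∑' t : ℕ, Gfun (d, t)) ?_
    show (∑' t : ℕ, Gfun (0, t)) = 0
    rw [tsum_congr Gfun_zero_left, tsum_zero]
  have hlhs : ∑' d : ℕ+, ∑' t : ℕ+, (if Nat.gcd d t = 1 then
      ((moebius d : ℝ) * (moebius t : ℝ)) / ((d : ℝ) ^ 2 * (t : ℝ) ^ 2) else 0)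
      = ∑' d : ℕ+, ∑' t : ℕ+, Gfun (↑d, ↑t) := rfl
  rw [hlhs, tsum_congr (fun d : ℕ+ => h5 ↑d), h6, ← h4, ← h3, ← heuler]
  exact (tprod_congr (fun p : Nat.Primes => Ffun_primepow p.prop))
end

section
/- Let T ≥ 1/2 and X ≥ 2 with c > 1, ε > 0. Then ∑_{T ≤ t < 2T} ∑_{l ≤ (X^c+1)/T²} τ(lt² − 1) ≪ X^{c+ε} T^{−1}, where the inner sum is over positive integers l with lt² − 1 ≥ 1, with implied constant depending only on c and ε. -/
lemma aux_step1 (k a : ℕ) (hk : 1 ≤ k) : a + 1 ≤ 2 ^ k * 2 ^ (a / k) := by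
  have h0 : 0 < k := hk
  have h1 : a < k * (a / k) + k := by
    have h := Nat.div_add_mod a k
    have h' := Nat.mod_lt a h0
    omega
  have h2 : a / k + 1 ≤ 2 ^ (a / k) := Nat.lt_two_pow_self
  have h3 : k ≤ 2 ^ k := Nat.le_of_lt (Nat.lt_two_pow_self (n := k))
  calc a + 1 ≤ (a / k + 1) * k := by nlinarith
    _ ≤ 2 ^ (a / k) * 2 ^ k := Nat.mul_le_mul h2 h3
    _ = 2 ^ k * 2 ^ (a / k) := mul_comm _ _

lemma aux_step2 (k a : ℕ) (hk : 1 ≤ k) : (a + 1) ^ k ≤ 2 ^ (k * k) * 2 ^ a := by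
  calc (a + 1) ^ k ≤ (2 ^ k * 2 ^ (a / k)) ^ k :=
        Nat.pow_le_pow_left (aux_step1 k a hk) k
    _ = 2 ^ (k * k) * 2 ^ (a / k * k) := by rw [mul_pow, ← pow_mul, ← pow_mul]
    _ ≤ 2 ^ (k * k) * 2 ^ a :=
        Nat.mul_le_mul_left _ (Nat.pow_le_pow_right (by norm_num) (Nat.div_mul_le_self a k))

lemma aux_key (k a p : ℕ) (hk : 1 ≤ k) (hp : 2 ≤ p) :
    (a + 1) ^ k ≤ (if p < 2 ^ (2 * k * k) then 2 ^ (2 * k * k) else 1) * p ^ a := by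
  have base := aux_step2 k a hk
  split_ifs with h
  · calc (a + 1) ^ k ≤ 2 ^ (k * k) * 2 ^ a := base
      _ ≤ 2 ^ (2 * k * k) * p ^ a :=
        Nat.mul_le_mul (Nat.pow_le_pow_right (by norm_num) (by nlinarith))
          (Nat.pow_le_pow_left hp a)
  · rcases Nat.eq_zero_or_pos a with rfl | ha
    · simp
    · have hkk : 1 ≤ k * k := Nat.one_le_iff_ne_zero.mpr (by positivity)
      have e1 : k * k ≤ k * k * a := Nat.le_mul_of_pos_right _ ha
      have e2 : a ≤ k * k * a := by
        calc a = 1 * a := (one_mul a).symm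
          _ ≤ k * k * a := Nat.mul_le_mul_right a hkk
      have h4 : 2 ^ (k * k) * 2 ^ a ≤ (2 ^ (2 * k * k)) ^ a := by
        rw [← pow_add, ← pow_mul]
        exact Nat.pow_le_pow_right (by norm_num) (by nlinarith [e1, e2])
      calc (a + 1) ^ k ≤ 2 ^ (k * k) * 2 ^ a := base
        _ ≤ (2 ^ (2 * k * k)) ^ a := h4
        _ ≤ p ^ a := Nat.pow_le_pow_left (le_of_not_gt h) a
        _ = 1 * p ^ a := (one_mul _).symm

lemma divisor_bound (k : ℕ) (hk : 1 ≤ k) (n : ℕ) :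
    n.divisors.card ^ k ≤ (2 ^ (2 * k * k)) ^ (2 ^ (2 * k * k)) * n := by
  rcases Nat.eq_zero_or_pos n with rfl | hn
  · simp [Nat.zero_pow hk]
  set P := 2 ^ (2 * k * k) with hPdef
  have hcard : n.divisors.card = n.primeFactors.prod (fun p => n.factorization p + 1) :=
    Nat.card_divisors hn.ne'
  have hprod : n.primeFactors.prod (fun p => p ^ n.factorization p) = n := by
    rw [← Nat.support_factorization]
    exact Nat.factorization_prod_pow_eq_self hn.ne'
  calc n.divisors.card ^ k
      = ∏ p ∈ n.primeFactors, (n.factorization p + 1) ^ k := by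
        rw [hcard, ← Finset.prod_pow]
    _ ≤ ∏ p ∈ n.primeFactors, (if p < P then P else 1) * p ^ n.factorization p := by
        apply Finset.prod_le_prod'
        intro p hp
        exact aux_key k (n.factorization p) p hk (Nat.Prime.two_le (Nat.prime_of_mem_primeFactors hp))
    _ = (∏ p ∈ n.primeFactors, (if p < P then P else 1)) * n := by
        rw [Finset.prod_mul_distrib, hprod]
    _ ≤ P ^ P * n := by
        apply Nat.mul_le_mul_right
        calc (∏ p ∈ n.primeFactors, (if p < P then P else 1))
            = P ^ (n.primeFactors.filter (· < P)).card := by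
              rw [Finset.prod_ite, Finset.prod_const, Finset.prod_const, one_pow, mul_one]
          _ ≤ P ^ P := by
              apply Nat.pow_le_pow_right (by positivity)
              calc (n.primeFactors.filter (· < P)).card ≤ (Finset.range P).card := by
                    apply Finset.card_le_card
                    intro p hp
                    simp only [Finset.mem_filter] at hp
                    exact Finset.mem_range.mpr hp.2
                _ = P := Finset.card_range P

/-- `∑_{T ≤ t < 2T} ∑_{l ≤ (X^c+1)/T², lt²-1 ≥ 1} τ(lt² - 1) ≪ X^{c+ε} T^{-1}`. -/
theorem double_sum_divisor_bound (c ε : ℝ) (hc : 1 < c) (hε : 0 < ε) :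
    ∃ C : ℝ, 0 < C ∧ ∀ T X : ℝ, 1 / 2 ≤ T → 2 ≤ X →
      ∑ t ∈ (Finset.Icc 1 ⌊2 * T⌋₊).filter (fun t : ℕ => T ≤ (t : ℝ) ∧ (t : ℝ) < 2 * T),
        ∑ l ∈ (Finset.Icc 1 ⌊(X ^ c + 1) / T ^ 2⌋₊).filter (fun l : ℕ => 2 ≤ l * t ^ 2),
          ((Nat.divisors (l * t ^ 2 - 1)).card : ℝ)
        ≤ C * X ^ (c + ε) * T⁻¹ := by
  -- choose k with c ≤ ε k
  set k : ℕ := ⌈c / ε⌉₊ + 1 with hkdef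
  have hk1 : 1 ≤ k := le_add_self
  have hkc : c ≤ ε * k := by
    have h1 : c / ε ≤ (⌈c / ε⌉₊ : ℝ) := Nat.le_ceil _
    have h2 : (⌈c / ε⌉₊ : ℝ) ≤ (k : ℝ) := by
      rw [hkdef]; push_cast; linarith
    calc c = (c / ε) * ε := by field_simp
      _ ≤ (k : ℝ) * ε := by nlinarith
      _ = ε * k := mul_comm _ _
  set D : ℕ := (2 ^ (2 * k * k)) ^ (2 ^ (2 * k * k)) with hDdef
  have hD1 : (1 : ℝ) ≤ (D : ℝ) := by
    have : 1 ≤ D := Nat.one_le_iff_ne_zero.mpr (by positivity)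
    exact_mod_cast this
  refine ⟨32 * D, by positivity, ?_⟩
  intro T X hT hX
  have hT0 : (0 : ℝ) < T := lt_of_lt_of_le (by norm_num) hT
  have hX0 : (0 : ℝ) < X := by linarith
  have hX1 : (1 : ℝ) ≤ X := by linarith
  have hXc1 : (1 : ℝ) ≤ X ^ c := Real.one_le_rpow hX1 (by linarith)
  have hXε0 : (0 : ℝ) < X ^ ε := Real.rpow_pos_of_pos hX0 ε
  set B : ℝ := 8 * D * X ^ ε with hBdef
  have hB0 : 0 ≤ B := by positivity
  -- pointwise bound on each divisor-count term
  have hterm : ∀ t ∈ (Finset.Icc 1 ⌊2 * T⌋₊).filter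
      (fun t : ℕ => T ≤ (t : ℝ) ∧ (t : ℝ) < 2 * T),
      ∀ l ∈ (Finset.Icc 1 ⌊(X ^ c + 1) / T ^ 2⌋₊).filter (fun l : ℕ => 2 ≤ l * t ^ 2),
      ((Nat.divisors (l * t ^ 2 - 1)).card : ℝ) ≤ B := by
    intro t ht l hl
    simp only [Finset.mem_filter, Finset.mem_Icc] at ht hl
    obtain ⟨⟨ht1, ht2⟩, htT, _⟩ := ht
    obtain ⟨⟨hl1, hl2⟩, hlt⟩ := hl
    set n : ℕ := l * t ^ 2 - 1 with hndef
    -- n ≤ 8 X^c  (as reals)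
    have hlR : (l : ℝ) ≤ (X ^ c + 1) / T ^ 2 := by
      calc (l : ℝ) ≤ (⌊(X ^ c + 1) / T ^ 2⌋₊ : ℝ) := by exact_mod_cast hl2
        _ ≤ (X ^ c + 1) / T ^ 2 := Nat.floor_le (by positivity)
    have htR : (t : ℝ) ≤ 2 * T := by
      calc (t : ℝ) ≤ (⌊2 * T⌋₊ : ℝ) := by exact_mod_cast ht2
        _ ≤ 2 * T := Nat.floor_le (by positivity)
    have htR0 : (0 : ℝ) ≤ (t : ℝ) := Nat.cast_nonneg t
    have hnR : (n : ℝ) ≤ 8 * X ^ c := by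
      have h1 : (n : ℝ) ≤ (l : ℝ) * (t : ℝ) ^ 2 := by
        have : (n : ℝ) = (l : ℝ) * (t : ℝ) ^ 2 - 1 := by
          rw [hndef]
          push_cast [Nat.cast_sub (by omega : 1 ≤ l * t ^ 2)]
          ring
        linarith
      have h2 : (l : ℝ) * (t : ℝ) ^ 2 ≤ ((X ^ c + 1) / T ^ 2) * (2 * T) ^ 2 := by
        apply mul_le_mul hlR (by nlinarith) (by positivity) (by positivity)
      have h3 : ((X ^ c + 1) / T ^ 2) * (2 * T) ^ 2 = 4 * (X ^ c + 1) := by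
        field_simp; ring
      linarith
    -- k-th power comparison
    have hpow : ((Nat.divisors n).card : ℝ) ^ k ≤ B ^ k := by
      have hnat : ((Nat.divisors n).card : ℝ) ^ k ≤ (D : ℝ) * n := by
        have := divisor_bound k hk1 n
        calc ((Nat.divisors n).card : ℝ) ^ k
            = (((Nat.divisors n).card ^ k : ℕ) : ℝ) := by push_cast; ring
          _ ≤ ((D * n : ℕ) : ℝ) := by exact_mod_cast this
          _ = (D : ℝ) * n := by push_cast; ring
      have hXck : X ^ c ≤ (X ^ ε) ^ k := by
        rw [← Real.rpow_natCast (X ^ ε) k, ← Real.rpow_mul (le_of_lt hX0)]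
        exact Real.rpow_le_rpow_of_exponent_le hX1 hkc
      have h8D : (8 : ℝ) * D ≤ (8 * D) ^ k :=
        le_self_pow₀ (by linarith) (by omega)
      calc ((Nat.divisors n).card : ℝ) ^ k ≤ (D : ℝ) * n := hnat
        _ ≤ (D : ℝ) * (8 * X ^ c) := by
            apply mul_le_mul_of_nonneg_left hnR (by positivity)
        _ = 8 * D * X ^ c := by ring
        _ ≤ (8 * D) ^ k * (X ^ ε) ^ k := by
            apply mul_le_mul h8D hXck (by positivity) (by positivity)
        _ = B ^ k := by rw [hBdef]; ring
    exact le_of_pow_le_pow_left₀ (by omega) hB0 hpow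
  -- sum the constant bound
  have hcardL : ((Finset.Icc 1 ⌊(X ^ c + 1) / T ^ 2⌋₊).card : ℝ) ≤ (X ^ c + 1) / T ^ 2 := by
    rw [Nat.card_Icc]
    simp only [Nat.add_sub_cancel]
    exact Nat.floor_le (by positivity)
  have hcardT : ((Finset.Icc 1 ⌊2 * T⌋₊).card : ℝ) ≤ 2 * T := by
    rw [Nat.card_Icc]
    simp only [Nat.add_sub_cancel]
    exact Nat.floor_le (by positivity)
  calc ∑ t ∈ (Finset.Icc 1 ⌊2 * T⌋₊).filter (fun t : ℕ => T ≤ (t : ℝ) ∧ (t : ℝ) < 2 * T),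
        ∑ l ∈ (Finset.Icc 1 ⌊(X ^ c + 1) / T ^ 2⌋₊).filter (fun l : ℕ => 2 ≤ l * t ^ 2),
          ((Nat.divisors (l * t ^ 2 - 1)).card : ℝ)
      ≤ ∑ t ∈ (Finset.Icc 1 ⌊2 * T⌋₊).filter (fun t : ℕ => T ≤ (t : ℝ) ∧ (t : ℝ) < 2 * T),
        (((X ^ c + 1) / T ^ 2) * B) := by
        apply Finset.sum_le_sum
        intro t ht
        calc ∑ l ∈ (Finset.Icc 1 ⌊(X ^ c + 1) / T ^ 2⌋₊).filter (fun l : ℕ => 2 ≤ l * t ^ 2),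
              ((Nat.divisors (l * t ^ 2 - 1)).card : ℝ)
            ≤ ∑ _l ∈ (Finset.Icc 1 ⌊(X ^ c + 1) / T ^ 2⌋₊).filter (fun l : ℕ => 2 ≤ l * t ^ 2), B :=
              Finset.sum_le_sum (fun l hl => hterm t ht l hl)
          _ = (((Finset.Icc 1 ⌊(X ^ c + 1) / T ^ 2⌋₊).filter (fun l : ℕ => 2 ≤ l * t ^ 2)).card : ℝ) * B := by
              rw [Finset.sum_const, nsmul_eq_mul]
          _ ≤ (((X ^ c + 1) / T ^ 2)) * B := by
              apply mul_le_mul_of_nonneg_right _ hB0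
              calc (((Finset.Icc 1 ⌊(X ^ c + 1) / T ^ 2⌋₊).filter (fun l : ℕ => 2 ≤ l * t ^ 2)).card : ℝ)
                  ≤ ((Finset.Icc 1 ⌊(X ^ c + 1) / T ^ 2⌋₊).card : ℝ) := by
                    exact_mod_cast Finset.card_filter_le _ _
                _ ≤ (X ^ c + 1) / T ^ 2 := hcardL
    _ = (((Finset.Icc 1 ⌊2 * T⌋₊).filter (fun t : ℕ => T ≤ (t : ℝ) ∧ (t : ℝ) < 2 * T)).card : ℝ)
          * (((X ^ c + 1) / T ^ 2) * B) := by
        rw [Finset.sum_const, nsmul_eq_mul]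
    _ ≤ (2 * T) * (((X ^ c + 1) / T ^ 2) * B) := by
        apply mul_le_mul_of_nonneg_right _ (by positivity)
        calc (((Finset.Icc 1 ⌊2 * T⌋₊).filter (fun t : ℕ => T ≤ (t : ℝ) ∧ (t : ℝ) < 2 * T)).card : ℝ)
            ≤ ((Finset.Icc 1 ⌊2 * T⌋₊).card : ℝ) := by exact_mod_cast Finset.card_filter_le _ _
          _ ≤ 2 * T := hcardT
    _ ≤ 32 * D * X ^ (c + ε) * T⁻¹ := by
        rw [Real.rpow_add hX0, hBdef]
        have hXc2 : X ^ c + 1 ≤ 2 * X ^ c := by linarith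
        have hT2 : T ^ 2 = T * T := sq T
        have key : (2 * T) * (((X ^ c + 1) / T ^ 2) * (8 * D * X ^ ε))
            = 16 * D * (X ^ c + 1) * X ^ ε * T⁻¹ := by
          field_simp
          ring
        rw [key]
        have : 16 * (D : ℝ) * (X ^ c + 1) * X ^ ε ≤ 32 * D * (X ^ c * X ^ ε) := by
          nlinarith [hXε0, hD1, hXc1]
        have hTinv : (0:ℝ) < T⁻¹ := by positivity
        nlinarith [this, hTinv]
end

section
/- Fix c with 1 < c < 7/6 and set z = X^{(2c−1)/4}. Then for every ε > 0, the number of triples (d, t, k) of positive integers with gcd(d,t) = 1, dt > z, (X/2)^c/d² < k ≤ X^c/d², kd² + 1 ≡ 0 (mod t²), and such that the interval [(kd²)^{1/c}, (kd²+1)^{1/c}) contains an integer, is O(X^{(6c+1)/8 + ε}). -/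
open Finset Real

lemma per_prime_bound (ε : ℝ) (hε : 0 < ε) (p a : ℕ) (hp : 2 ≤ p) :
    ((a : ℝ) + 1) ≤
      (if (p : ℝ) < (2:ℝ) ^ (1/ε) then (1 + 1/(ε * Real.log 2)) else 1) *
        (p : ℝ) ^ ((a : ℝ) * ε) := by
  have hp0 : (0:ℝ) ≤ p := by positivity
  have hp2 : (2:ℝ) ≤ (p:ℝ) := by exact_mod_cast hp
  have haε : (0:ℝ) ≤ (a:ℝ) * ε := by positivity
  split_ifs with h
  · -- small prime case : use  a+1 ≤ (1+1/δ) * 2^(aε) ≤ (1+1/δ) p^(aε)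
    have hδ : 0 < ε * Real.log 2 := by
      have := Real.log_pos (by norm_num : (1:ℝ) < 2)
      positivity
    have h2 : (2:ℝ) ^ ((a:ℝ) * ε) ≤ (p:ℝ) ^ ((a:ℝ) * ε) :=
      Real.rpow_le_rpow (by norm_num) hp2 haε
    have hexp : (2:ℝ) ^ ((a:ℝ) * ε) = Real.exp ((a:ℝ) * (ε * Real.log 2)) := by
      rw [Real.rpow_def_of_pos (by norm_num)]
      ring_nf
    have key : ((a:ℝ) + 1) ≤ (1 + 1/(ε * Real.log 2)) * (2:ℝ) ^ ((a:ℝ) * ε) := by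
      rw [hexp]
      have h1 : 1 + (a:ℝ) * (ε * Real.log 2) ≤ Real.exp ((a:ℝ) * (ε * Real.log 2)) := by
        have := Real.add_one_le_exp ((a:ℝ) * (ε * Real.log 2))
        linarith
      have h3 : ((a:ℝ) + 1) ≤ (1 + 1/(ε * Real.log 2)) * (1 + (a:ℝ) * (ε * Real.log 2)) := by
        have ha0 : (0:ℝ) ≤ (a:ℝ) := by positivity
        have e1 : (1 + 1/(ε * Real.log 2)) * (1 + (a:ℝ) * (ε * Real.log 2))
            = 1 + (a:ℝ) * (ε * Real.log 2) + 1/(ε * Real.log 2) + (a:ℝ) := by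
          field_simp
          ring
        rw [e1]
        have : (0:ℝ) ≤ (a:ℝ) * (ε * Real.log 2) := by positivity
        have : (0:ℝ) ≤ 1/(ε * Real.log 2) := by positivity
        linarith
      calc ((a:ℝ) + 1) ≤ (1 + 1/(ε * Real.log 2)) * (1 + (a:ℝ) * (ε * Real.log 2)) := h3
        _ ≤ (1 + 1/(ε * Real.log 2)) * Real.exp ((a:ℝ) * (ε * Real.log 2)) := by
            apply mul_le_mul_of_nonneg_left h1
            positivity
    calc ((a:ℝ) + 1) ≤ (1 + 1/(ε * Real.log 2)) * (2:ℝ) ^ ((a:ℝ) * ε) := key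
      _ ≤ (1 + 1/(ε * Real.log 2)) * (p:ℝ) ^ ((a:ℝ) * ε) := by
          apply mul_le_mul_of_nonneg_left h2
          positivity
  · -- large prime : p^ε ≥ 2, so p^(aε) ≥ 2^a ≥ a+1
    push_neg at h
    have h2 : (2:ℝ) ≤ (p:ℝ) ^ ε := by
      calc (2:ℝ) = ((2:ℝ) ^ (1/ε)) ^ ε := by
            rw [← Real.rpow_mul (by norm_num : (0:ℝ) ≤ 2)]
            rw [one_div_mul_cancel (ne_of_gt hε), Real.rpow_one]
        _ ≤ (p:ℝ) ^ ε := Real.rpow_le_rpow (by positivity) h (le_of_lt hε)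
    have h3 : ((a:ℝ) + 1) ≤ (2:ℝ) ^ (a:ℕ) := by
      have := Nat.lt_two_pow_self (n := a)
      exact_mod_cast Nat.succ_le_of_lt this
    have h4 : ((2:ℝ)) ^ (a:ℕ) ≤ ((p:ℝ) ^ ε) ^ (a:ℕ) :=
      pow_le_pow_left₀ (by norm_num) h2 a
    have h5 : ((p:ℝ) ^ ε) ^ (a:ℕ) = (p:ℝ) ^ ((a:ℝ) * ε) := by
      rw [← Real.rpow_natCast ((p:ℝ)^ε) a, ← Real.rpow_mul hp0]
      ring_nf
    rw [one_mul]
    calc ((a:ℝ)+1) ≤ (2:ℝ) ^ (a:ℕ) := h3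
      _ ≤ ((p:ℝ) ^ ε) ^ (a:ℕ) := h4
      _ = (p:ℝ) ^ ((a:ℝ) * ε) := h5

lemma divisor_bound_s15 (ε : ℝ) (hε : 0 < ε) :
    ∃ C : ℝ, 1 ≤ C ∧ ∀ n : ℕ, 0 < n → (n.divisors.card : ℝ) ≤ C * (n : ℝ) ^ ε := by
  classical
  set A : ℝ := 1 + 1/(ε * Real.log 2) with hA
  have hlog2 : 0 < Real.log 2 := Real.log_pos (by norm_num)
  have hA1 : 1 ≤ A := by
    have : 0 < 1/(ε * Real.log 2) := by positivity
    simp [hA]; positivity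
  set P : ℕ := ⌈(2:ℝ) ^ (1/ε)⌉₊ with hPdef
  refine ⟨A ^ P, one_le_pow₀ hA1, fun n hn => ?_⟩
  have hn0 : n ≠ 0 := Nat.pos_iff_ne_zero.mp hn
  rw [Nat.card_divisors hn0]
  have step1 : ((n.primeFactors.prod (n.factorization · + 1) : ℕ) : ℝ)
      ≤ ∏ p ∈ n.primeFactors,
          ((if (p:ℝ) < (2:ℝ)^(1/ε) then A else 1) * (p:ℝ) ^ ((n.factorization p : ℝ) * ε)) := by
    push_cast
    apply Finset.prod_le_prod
    · intro p _; positivity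
    · intro p hp
      exact per_prime_bound ε hε p _ (Nat.prime_of_mem_primeFactors hp).two_le
  rw [Finset.prod_mul_distrib] at step1
  have h2 : ∏ p ∈ n.primeFactors, (p:ℝ) ^ ((n.factorization p : ℝ) * ε) = (n:ℝ) ^ ε := by
    have e1 : ∀ p ∈ n.primeFactors, (p:ℝ) ^ ((n.factorization p : ℝ) * ε)
        = ((p:ℝ) ^ (n.factorization p : ℕ)) ^ ε := fun p hp => by
      rw [← Real.rpow_natCast (p:ℝ) (n.factorization p), ← Real.rpow_mul (by positivity)]
    rw [Finset.prod_congr rfl e1,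
      Real.finset_prod_rpow _ _ (fun p _ => by positivity) ε]
    congr 1
    have hfac : (∏ p ∈ n.primeFactors, p ^ n.factorization p) = n := by
      conv_rhs => rw [← Nat.factorization_prod_pow_eq_self hn0]
      rfl
    conv_rhs => rw [← hfac]
    push_cast
    rfl
  have h3 : (∏ p ∈ n.primeFactors, (if (p:ℝ) < (2:ℝ)^(1/ε) then A else 1)) ≤ A ^ P := by
    rw [Finset.prod_ite, Finset.prod_const, Finset.prod_const, one_pow, mul_one]
    apply pow_le_pow_right₀ hA1
    have hsub : n.primeFactors.filter (fun p : ℕ => (p:ℝ) < (2:ℝ)^(1/ε)) ⊆ Finset.range P := by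
      intro p hp
      rw [Finset.mem_filter] at hp
      rw [Finset.mem_range]
      have : (p:ℝ) < (P:ℝ) := lt_of_lt_of_le hp.2 (Nat.le_ceil _)
      exact_mod_cast this
    calc (n.primeFactors.filter (fun p : ℕ => (p:ℝ) < (2:ℝ)^(1/ε))).card
        ≤ (Finset.range P).card := Finset.card_le_card hsub
      _ = P := Finset.card_range P
  calc ((n.primeFactors.prod (n.factorization · + 1) : ℕ) : ℝ)
      ≤ (∏ p ∈ n.primeFactors, (if (p:ℝ) < (2:ℝ)^(1/ε) then A else 1))
        * ∏ p ∈ n.primeFactors, (p:ℝ) ^ ((n.factorization p : ℝ) * ε) := step1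
    _ ≤ A ^ P * (n:ℝ) ^ ε := by
        rw [h2]
        apply mul_le_mul_of_nonneg_right h3 (by positivity)

open Finset

lemma card_nat_real_Ioc (F : Finset ℕ) (x y : ℝ) (hxy : x ≤ y)
    (h : ∀ k ∈ F, x < (k:ℝ) ∧ (k:ℝ) ≤ y) : (F.card : ℝ) ≤ y - x + 1 := by
  classical
  have hinj : Set.InjOn (fun k : ℕ => (k : ℤ)) F := fun a _ b _ hab => by simpa using hab
  have hcard : F.card = (F.image (fun k : ℕ => (k:ℤ))).card :=
    (Finset.card_image_of_injOn hinj).symm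
  have hsub : F.image (fun k : ℕ => (k:ℤ)) ⊆ Finset.Icc (⌊x⌋ + 1) ⌊y⌋ := by
    intro j hj
    simp only [Finset.mem_image] at hj
    obtain ⟨k, hk, rfl⟩ := hj
    rcases h k hk with ⟨h1, h2⟩
    rw [Finset.mem_Icc]
    refine ⟨Int.add_one_le_iff.mpr (Int.floor_lt.mpr (by exact_mod_cast h1)), ?_⟩
    exact Int.le_floor.mpr (by exact_mod_cast h2)
  have h1 : (F.card : ℝ) ≤ ((Finset.Icc (⌊x⌋ + 1) ⌊y⌋).card : ℝ) := by
    exact_mod_cast hcard ▸ Finset.card_le_card hsub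
  refine h1.trans ?_
  rw [Int.card_Icc]
  have e : ((⌊y⌋ + 1 - (⌊x⌋ + 1)).toNat : ℤ) = max (⌊y⌋ - ⌊x⌋) 0 := by
    rw [Int.toNat_eq_max]; ring_nf
  have e2 : (((⌊y⌋ + 1 - (⌊x⌋ + 1)).toNat : ℤ) : ℝ) ≤ y - x + 1 := by
    rw [e]
    rcases max_cases (⌊y⌋ - ⌊x⌋) 0 with ⟨he, _⟩ | ⟨he, _⟩ <;> rw [he] <;> push_cast
    · have hy := Int.floor_le y
      have hx := Int.lt_floor_add_one x
      linarith
    · linarith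
  exact_mod_cast e2

lemma card_congruent (F : Finset ℕ) (q : ℕ) (hq : 0 < q) (x y : ℝ) (hxy : x ≤ y) (hx : 0 ≤ x)
    (hmem : ∀ k ∈ F, x < (k:ℝ) ∧ (k:ℝ) ≤ y)
    (hcong : ∀ k ∈ F, ∀ l ∈ F, k ≡ l [MOD q]) :
    (F.card : ℝ) ≤ (y - x)/q + 2 := by
  classical
  have hq' : (0:ℝ) < q := by exact_mod_cast hq
  have hinj : Set.InjOn (fun k : ℕ => k / q) F := by
    intro a ha b hb hab
    replace hab : a / q = b / q := by simpa using hab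
    have hm : a % q = b % q := hcong a ha b hb
    rw [← Nat.div_add_mod a q, ← Nat.div_add_mod b q, hab, hm]
  have hcard : F.card = (F.image (fun k : ℕ => k / q)).card :=
    (Finset.card_image_of_injOn hinj).symm
  have key : ((F.image (fun k : ℕ => k / q)).card : ℝ) ≤ y/q - (x/q - 1) + 1 := by
    apply card_nat_real_Ioc
    · have h0 : x/q ≤ y/q := by gcongr
      linarith
    · intro j hj
      simp only [Finset.mem_image] at hj
      obtain ⟨k, hk, rfl⟩ := hj
      rcases hmem k hk with ⟨h1, h2⟩
      have hdm : (q:ℝ) * ((k / q : ℕ) : ℝ) = (k:ℝ) - ((k % q : ℕ) : ℝ) := by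
        have h := Nat.div_add_mod k q
        have h' : ((q * (k / q) + k % q : ℕ) : ℝ) = (k:ℝ) := by rw [h]
        push_cast at h'
        linarith
      have hmod : ((k % q : ℕ) : ℝ) < q := by exact_mod_cast Nat.mod_lt k hq
      constructor
      · rw [sub_lt_iff_lt_add, div_lt_iff₀ hq']
        have : ((k / q : ℕ) : ℝ) * q = (k:ℝ) - ((k % q : ℕ) : ℝ) := by rw [← hdm]; ring
        nlinarith
      · calc ((k / q : ℕ) : ℝ) ≤ (k:ℝ)/q := Nat.cast_div_le
          _ ≤ y / q := by gcongr
  rw [hcard]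
  refine key.trans ?_
  rw [sub_div]
  linarith

lemma sum_inv_sq_Ioc (a : ℕ) (ha : 1 ≤ a) :
    ∀ b : ℕ, (∑ d ∈ Finset.Ioc a b, (1:ℝ)/(d:ℝ)^2) ≤ 1/(a:ℝ) - 1/(max a b : ℝ) := by
  intro b
  induction b with
  | zero => simp [Finset.Ioc_eq_empty_of_le (Nat.zero_le a), ha]
  | succ b ih =>
    rcases le_or_gt (b+1) a with hle | hlt
    · rw [Finset.Ioc_eq_empty_of_le (by omega)]
      rw [max_eq_left (by exact_mod_cast hle : ((b+1:ℕ):ℝ) ≤ (a:ℝ))]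
      simp
    · have hab : a ≤ b := by omega
      rw [Finset.sum_Ioc_succ_top (by omega)]
      rw [max_eq_right (by exact_mod_cast (by omega : a ≤ b + 1) : (a:ℝ) ≤ ((b+1:ℕ):ℝ))]
      rcases Nat.eq_or_lt_of_le hab with rfl | hab'
      · rw [Finset.Ioc_self, Finset.sum_empty, zero_add]
        rw [max_eq_left (le_refl (a:ℝ))] at *
        have hb0 : (0:ℝ) < a := by exact_mod_cast ha
        have hb1 : (0:ℝ) < (a:ℝ) + 1 := by linarith
        rw [show ((a+1:ℕ):ℝ) = (a:ℝ)+1 by push_cast; ring]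
        rw [div_sub_div _ _ (ne_of_gt hb0) (ne_of_gt hb1)]
        rw [div_le_div_iff₀ (by positivity) (by positivity)]
        ring_nf
        nlinarith
      · rw [max_eq_right (by exact_mod_cast hab : (a:ℝ) ≤ (b:ℝ))] at ih
        have hb0 : (0:ℝ) < b := by
          have : 1 ≤ b := by omega
          exact_mod_cast this
        have hb1 : (0:ℝ) < (b:ℝ)+1 := by linarith
        have step : (1:ℝ)/((b+1:ℕ):ℝ)^2 ≤ 1/(b:ℝ) - 1/((b:ℝ)+1) := by
          rw [show ((b+1:ℕ):ℝ) = (b:ℝ)+1 by push_cast; ring]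
          rw [div_sub_div _ _ (ne_of_gt hb0) (ne_of_gt hb1)]
          rw [div_le_div_iff₀ (by positivity) (by positivity)]
          ring_nf
          nlinarith
        have : ((b+1:ℕ):ℝ) = (b:ℝ)+1 := by push_cast; ring
        rw [this] at step ⊢
        linarith [ih]

lemma sum_inv_sq_Icc_le_two (b : ℕ) :
    (∑ t ∈ Finset.Icc 1 b, (1:ℝ)/(t:ℝ)^2) ≤ 2 := by
  rcases Nat.eq_zero_or_pos b with rfl | hb
  · simp
  · rw [← Finset.Ioc_insert_left hb, Finset.sum_insert (by simp)]
    have h2 := sum_inv_sq_Ioc 1 le_rfl b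
    have h3 : (0:ℝ) ≤ 1/((1:ℝ) ⊔ (b:ℝ)) := by
      have : (1:ℝ) ≤ (1:ℝ) ⊔ (b:ℝ) := le_max_left _ _
      positivity
    have h4 : (∑ d ∈ Finset.Ioc 1 b, (1:ℝ)/(d:ℝ)^2) ≤ 1 := by
      refine h2.trans ?_
      push_cast
      linarith
    have h5 : (1:ℝ)/(((1:ℕ)):ℝ)^2 = 1 := by norm_num
    rw [h5]
    linarith

set_option maxHeartbeats 4000000

/-- The number of triples `(d,t,k)` with `gcd(d,t)=1`, `dt > z = X^{(2c-1)/4}`,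
`(X/2)^c/d² < k ≤ X^c/d²`, `t² ∣ kd²+1`, and `[(kd²)^{1/c}, (kd²+1)^{1/c})`
containing an integer, is `O(X^{(6c+1)/8+ε})`. -/
theorem count_large_dt_triples (c : ℝ) (hc : 1 < c) (hc' : c < 7 / 6) (ε : ℝ) (hε : 0 < ε) :
    ∃ C : ℝ, 0 < C ∧ ∃ X₀ : ℝ, ∀ X : ℝ, X₀ ≤ X →
      ({p : ℕ × ℕ × ℕ | 0 < p.1 ∧ 0 < p.2.1 ∧ 0 < p.2.2 ∧
          Nat.gcd p.1 p.2.1 = 1 ∧ X ^ ((2 * c - 1) / 4) < (p.1 * p.2.1 : ℝ) ∧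
          (X / 2) ^ c / (p.1 : ℝ) ^ 2 < (p.2.2 : ℝ) ∧ (p.2.2 : ℝ) ≤ X ^ c / (p.1 : ℝ) ^ 2 ∧
          p.2.1 ^ 2 ∣ p.2.2 * p.1 ^ 2 + 1 ∧
          ∃ n : ℤ, ((p.2.2 * p.1 ^ 2 : ℕ) : ℝ) ^ (1 / c) ≤ (n : ℝ) ∧
            (n : ℝ) < ((p.2.2 * p.1 ^ 2 : ℕ) + 1 : ℝ) ^ (1 / c)}.ncard : ℝ)
        ≤ C * X ^ ((6 * c + 1) / 8 + ε) := by
  classical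
  have hc0 : (0:ℝ) < c := by linarith
  obtain ⟨C₁, hC₁, hdiv⟩ := divisor_bound_s15 (ε / c) (by positivity)
  refine ⟨6 + 6 * C₁, by linarith, 256, fun X hX => ?_⟩
  have hX1 : (1:ℝ) ≤ X := by linarith
  have hX0 : (0:ℝ) < X := by linarith
  set S : Set (ℕ × ℕ × ℕ) := {p : ℕ × ℕ × ℕ | 0 < p.1 ∧ 0 < p.2.1 ∧ 0 < p.2.2 ∧
          Nat.gcd p.1 p.2.1 = 1 ∧ X ^ ((2 * c - 1) / 4) < (p.1 * p.2.1 : ℝ) ∧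
          (X / 2) ^ c / (p.1 : ℝ) ^ 2 < (p.2.2 : ℝ) ∧ (p.2.2 : ℝ) ≤ X ^ c / (p.1 : ℝ) ^ 2 ∧
          p.2.1 ^ 2 ∣ p.2.2 * p.1 ^ 2 + 1 ∧
          ∃ n : ℤ, ((p.2.2 * p.1 ^ 2 : ℕ) : ℝ) ^ (1 / c) ≤ (n : ℝ) ∧
            (n : ℝ) < ((p.2.2 * p.1 ^ 2 : ℕ) + 1 : ℝ) ^ (1 / c)} with hSdef
  set T : ℝ := X ^ ((2*c-1)/8) with hTdef
  set Xc : ℝ := X ^ c with hXcdef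
  set Xh : ℝ := X ^ (c/2) with hXhdef
  -- basic facts
  have hT1 : (1:ℝ) ≤ T := Real.one_le_rpow hX1 (by linarith)
  have hT2 : (2:ℝ) ≤ T := by
    have h256 : ((256:ℝ)) ^ ((1:ℝ)/8) = 2 := by
      rw [show (256:ℝ) = 2^(8:ℕ) by norm_num, ← Real.rpow_natCast 2 8,
        ← Real.rpow_mul (by norm_num)]
      norm_num
    calc (2:ℝ) = (256:ℝ) ^ ((1:ℝ)/8) := h256.symm
      _ ≤ X ^ ((1:ℝ)/8) := Real.rpow_le_rpow (by norm_num) hX (by norm_num)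
      _ ≤ T := Real.rpow_le_rpow_of_exponent_le hX1 (by linarith)
  have hT0 : (0:ℝ) < T := by linarith
  have hXc1 : (1:ℝ) ≤ Xc := Real.one_le_rpow hX1 (by linarith)
  have hXh0 : (0:ℝ) ≤ Xh := Real.rpow_nonneg hX0.le _
  have hXh1 : (1:ℝ) ≤ Xh := Real.one_le_rpow hX1 (by positivity)
  have hXh2 : Xh^(2:ℕ) = Xc := by
    rw [hXhdef, hXcdef, ← Real.rpow_natCast (X ^ (c/2)) 2, ← Real.rpow_mul hX0.le]
    norm_num
  have hT2sq : T^(2:ℕ) = X ^ ((2*c-1)/4) := by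
    rw [hTdef, ← Real.rpow_natCast (X ^ ((2*c-1)/8)) 2, ← Real.rpow_mul hX0.le]
    congr 1
    ring
  have hhalf : (0:ℝ) ≤ (X/2)^c := Real.rpow_nonneg (by linarith) _
  have hhalfle : (X/2)^c ≤ Xc := Real.rpow_le_rpow (by linarith) (by linarith) hc0.le
  have hfT : 2 ≤ ⌊T⌋₊ := Nat.le_floor (by exact_mod_cast hT2)
  have hfT1 : 1 ≤ ⌊T⌋₊ := by omega
  have hfT0 : (0:ℝ) < (⌊T⌋₊:ℝ) := by exact_mod_cast Nat.lt_of_lt_of_le Nat.zero_lt_one hfT1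
  have hfTle : (⌊T⌋₊:ℝ) ≤ T := Nat.floor_le hT0.le
  have hTfl : T ≤ 2*(⌊T⌋₊:ℝ) := by
    have h1 : T < (⌊T⌋₊:ℝ) + 1 := Nat.lt_floor_add_one T
    have h2 : (1:ℝ) ≤ (⌊T⌋₊:ℝ) := by exact_mod_cast hfT1
    linarith
  have hinvT : (1:ℝ)/(⌊T⌋₊:ℝ) ≤ 2/T := by
    rw [div_le_div_iff₀ hfT0 hT0]
    linarith
  set Nd := ⌊Xh⌋₊ with hNddef
  set Nt := ⌊Xh + 1⌋₊ with hNtdef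
  set K := ⌊Xc⌋₊ with hKdef
  set Box : Finset (ℕ×ℕ×ℕ) := (Finset.Icc 1 Nd) ×ˢ (Finset.Icc 1 Nt) ×ˢ (Finset.Icc 1 K)
    with hBoxdef
  -- upper bound for kd²
  have hkd : ∀ p ∈ S, ((p.2.2:ℝ) * (p.1:ℝ)^2 ≤ Xc ∧ (X/2)^c < (p.2.2:ℝ) * (p.1:ℝ)^2) := by
    rintro p ⟨hd0, ht0, hk0, -, -, hk1, hk2, -, -⟩
    have hd0' : (0:ℝ) < (p.1:ℝ)^2 := by
      have : (0:ℝ) < (p.1:ℝ) := by exact_mod_cast hd0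
      positivity
    constructor
    · rw [← le_div_iff₀ hd0']; exact hk2
    · rw [← div_lt_iff₀ hd0']; exact hk1
  -- membership in the box
  have hSB : S ⊆ ↑Box := by
    rintro p hp
    obtain ⟨hkdU, hkdL⟩ := hkd p hp
    obtain ⟨hd0, ht0, hk0, -, -, hk1, hk2, hdvd, -⟩ := hp
    have hd1 : (1:ℝ) ≤ (p.1:ℝ) := by exact_mod_cast hd0
    have hk1' : (1:ℝ) ≤ (p.2.2:ℝ) := by exact_mod_cast hk0
    simp only [hBoxdef, Finset.coe_product, Set.mem_prod, Finset.mem_coe, Finset.mem_Icc]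
    have hdXh : (p.1:ℝ) ≤ Xh := by
      have h1 : (p.1:ℝ)^2 ≤ Xc := by nlinarith
      have := Real.sqrt_le_sqrt h1
      rwa [Real.sqrt_sq (by positivity), ← hXh2, Real.sqrt_sq hXh0] at this
    have htXh : (p.2.1:ℝ) ≤ Xh + 1 := by
      have ht2 : p.2.1^2 ≤ p.2.2 * p.1^2 + 1 := Nat.le_of_dvd (Nat.succ_pos _) hdvd
      have ht2' : ((p.2.1:ℝ))^2 ≤ (p.2.2:ℝ) * (p.1:ℝ)^2 + 1 := by exact_mod_cast ht2
      have h1 : ((p.2.1:ℝ))^2 ≤ (Xh+1)^2 := by nlinarith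
      have := Real.sqrt_le_sqrt h1
      rwa [Real.sqrt_sq (by positivity), Real.sqrt_sq (by positivity)] at this
    refine ⟨⟨hd0, Nat.le_floor hdXh⟩, ⟨ht0, Nat.le_floor htXh⟩, ⟨hk0, Nat.le_floor ?_⟩⟩
    calc (p.2.2:ℝ) ≤ Xc / (p.1:ℝ)^2 := hk2
      _ ≤ Xc := by
          apply div_le_self (by linarith)
          nlinarith
  have hfin : S.Finite := Box.finite_toSet.subset hSB
  have hcard : (S.ncard : ℝ) = (hfin.toFinset.card : ℝ) := by
    rw [Set.ncard_eq_toFinset_card S hfin]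
  rw [hcard]
  set F : Finset (ℕ×ℕ×ℕ) := hfin.toFinset with hFdef
  have hFS : ∀ p : ℕ×ℕ×ℕ, p ∈ F ↔ p ∈ S := fun p => Set.Finite.mem_toFinset hfin
  -- the congruence fact
  have hmodeq : ∀ d t k k' : ℕ, Nat.gcd d t = 1 → t^2 ∣ k * d^2 + 1 → t^2 ∣ k' * d^2 + 1 →
      k ≡ k' [MOD t^2] := by
    intro d t k k' hgcd h1 h2
    have e1 : k * d^2 + 1 ≡ k' * d^2 + 1 [MOD t^2] :=
      ((Nat.modEq_zero_iff_dvd).mpr h1).trans ((Nat.modEq_zero_iff_dvd).mpr h2).symm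
    have e2 : k * d^2 ≡ k' * d^2 [MOD t^2] := Nat.ModEq.add_right_cancel' 1 e1
    have hco : Nat.Coprime (t^2) (d^2) := Nat.Coprime.pow (n := 2) (m := 2) (Nat.coprime_comm.mp hgcd)
    exact Nat.ModEq.cancel_right_of_coprime hco e2
  set F₁ : Finset (ℕ×ℕ×ℕ) := F.filter (fun p => (p.2.1:ℝ) ≤ T) with hF₁def
  set F₂ : Finset (ℕ×ℕ×ℕ) := F.filter (fun p => ¬ ((p.2.1:ℝ) ≤ T)) with hF₂def
  have hsplit : F.card = F₁.card + F₂.card :=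
    (Finset.card_filter_add_card_filter_not (s := F) (fun p : ℕ×ℕ×ℕ => (p.2.1:ℝ) ≤ T)).symm
  -- ========== bound on F₁ ==========
  have hF₁ : (F₁.card : ℝ) ≤ Xc * ((2/T) * 2) + (Xh * T) * 2 := by
    set G₁ : Finset (ℕ×ℕ) := (Finset.Ioc ⌊T⌋₊ Nd) ×ˢ (Finset.Icc 1 ⌊T⌋₊) with hG₁def
    have hmap : ∀ p ∈ F₁, (p.1, p.2.1) ∈ G₁ := by
      intro p hp
      rw [hF₁def, Finset.mem_filter] at hp
      obtain ⟨hpF, hpt⟩ := hp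
      have hpS := (hFS p).mp hpF
      have hpB := hSB hpS
      simp only [hBoxdef, Finset.coe_product, Set.mem_prod, Finset.mem_coe,
        Finset.mem_Icc] at hpB
      obtain ⟨hd0, ht0, hk0, hgcd, hz, -⟩ := hpS
      rw [hG₁def, Finset.mem_product, Finset.mem_Ioc, Finset.mem_Icc]
      have hTd : T < (p.1:ℝ) := by
        have ht0' : (0:ℝ) < (p.2.1:ℝ) := by exact_mod_cast ht0
        have hd0' : (0:ℝ) ≤ (p.1:ℝ) := by positivity
        rw [← hT2sq] at hz
        nlinarith
      exact ⟨⟨(Nat.floor_lt hT0.le).mpr hTd, hpB.1.2⟩, ht0, Nat.le_floor hpt⟩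
    have hfib : ∀ b ∈ G₁, ((F₁.filter fun p => (p.1, p.2.1) = b).card : ℝ)
        ≤ Xc * (1/(b.1:ℝ)^2) * (1/(b.2:ℝ)^2) + 2 := by
      rintro ⟨d, t⟩ hb
      rw [hG₁def, Finset.mem_product, Finset.mem_Ioc, Finset.mem_Icc] at hb
      obtain ⟨⟨hdT, hdN⟩, ht1, htT⟩ := hb
      have hd0 : 0 < d := lt_of_le_of_lt (Nat.zero_le _) hdT
      have hd0' : (0:ℝ) < (d:ℝ) := by exact_mod_cast hd0
      have ht0' : (0:ℝ) < (t:ℝ) := by exact_mod_cast ht1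
      have hmemFib : ∀ p ∈ F₁.filter (fun p => (p.1, p.2.1) = (d, t)),
          p ∈ S ∧ p.1 = d ∧ p.2.1 = t := by
        intro p hp
        rw [Finset.mem_filter, hF₁def, Finset.mem_filter] at hp
        obtain ⟨⟨hpF, -⟩, heq⟩ := hp
        have h1 : p.1 = d := congrArg Prod.fst heq
        have h2 : p.2.1 = t := congrArg Prod.snd heq
        exact ⟨(hFS p).mp hpF, h1, h2⟩
      have hinj : Set.InjOn (fun p : ℕ×ℕ×ℕ => p.2.2)
          (F₁.filter (fun p => (p.1, p.2.1) = (d, t))) := by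
        intro p hp q hq hpq
        obtain ⟨-, hp1, hp2⟩ := hmemFib p hp
        obtain ⟨-, hq1, hq2⟩ := hmemFib q hq
        exact Prod.ext (hp1.trans hq1.symm) (Prod.ext (hp2.trans hq2.symm) hpq)
      have hcardim : (F₁.filter (fun p => (p.1, p.2.1) = (d, t))).card
          = ((F₁.filter (fun p => (p.1, p.2.1) = (d, t))).image (fun p => p.2.2)).card :=
        (Finset.card_image_of_injOn hinj).symm
      have hbd : (((F₁.filter (fun p => (p.1, p.2.1) = (d, t))).image
            (fun p => p.2.2)).card : ℝ)
          ≤ (Xc/(d:ℝ)^2 - (X/2)^c/(d:ℝ)^2)/((t^2 : ℕ):ℝ) + 2 := by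
        apply card_congruent _ (t^2) (by positivity) _ _ ?_ (by positivity) ?_ ?_
        · gcongr
        · intro k hk
          rw [Finset.mem_image] at hk
          obtain ⟨p, hp, rfl⟩ := hk
          obtain ⟨hpS, hp1, hp2⟩ := hmemFib p hp
          obtain ⟨-, -, -, -, -, hk1, hk2, -, -⟩ := hpS
          rw [hp1] at hk1 hk2
          exact ⟨hk1, hk2⟩
        · intro k hk l hl
          rw [Finset.mem_image] at hk hl
          obtain ⟨p, hp, rfl⟩ := hk
          obtain ⟨q, hq, rfl⟩ := hl
          obtain ⟨hpS, hp1, hp2⟩ := hmemFib p hp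
          obtain ⟨hqS, hq1, hq2⟩ := hmemFib q hq
          obtain ⟨-, -, -, hgcdp, -, -, -, hdvdp, -⟩ := hpS
          obtain ⟨-, -, -, hgcdq, -, -, -, hdvdq, -⟩ := hqS
          rw [hp1, hp2] at hgcdp hdvdp
          rw [hq1, hq2] at hgcdq hdvdq
          exact hmodeq d t _ _ hgcdp hdvdp hdvdq
      rw [hcardim]
      refine hbd.trans ?_
      have hcast : ((t^2 : ℕ):ℝ) = (t:ℝ)^2 := by push_cast; ring
      rw [hcast]
      have h1 : (Xc/(d:ℝ)^2 - (X/2)^c/(d:ℝ)^2)/((t:ℝ)^2)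
          ≤ Xc * (1/(d:ℝ)^2) * (1/(t:ℝ)^2) := by
        rw [div_le_iff₀ (by positivity)]
        have h2 : (0:ℝ) ≤ (X/2)^c/(d:ℝ)^2 := by positivity
        have h3 : Xc * (1/(d:ℝ)^2) * (1/(t:ℝ)^2) * (t:ℝ)^2 = Xc/(d:ℝ)^2 := by
          field_simp
        rw [h3]
        linarith
      linarith
    have e := Finset.card_eq_sum_card_fiberwise hmap
    have ecast : ((F₁.card):ℝ) = ∑ b ∈ G₁, ((F₁.filter fun p => (p.1, p.2.1) = b).card : ℝ) := by
      rw [e]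
      push_cast
      rfl
    rw [ecast]
    have h1 : ∑ b ∈ G₁, ((F₁.filter fun p => (p.1, p.2.1) = b).card : ℝ)
        ≤ ∑ b ∈ G₁, (Xc * (1/(b.1:ℝ)^2) * (1/(b.2:ℝ)^2) + 2) := Finset.sum_le_sum hfib
    have hprod : ∑ b ∈ G₁, (Xc * (1/(b.1:ℝ)^2) * (1/(b.2:ℝ)^2))
        = Xc * ((∑ d ∈ Finset.Ioc ⌊T⌋₊ Nd, 1/(d:ℝ)^2)
          * (∑ t ∈ Finset.Icc 1 ⌊T⌋₊, 1/(t:ℝ)^2)) := by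
      rw [hG₁def, Finset.sum_product, Finset.sum_mul_sum, Finset.mul_sum]
      refine Finset.sum_congr rfl fun d _ => ?_
      rw [Finset.mul_sum]
      exact Finset.sum_congr rfl fun t _ => by ring
    rw [Finset.sum_add_distrib, Finset.sum_const, hprod, nsmul_eq_mul] at h1
    have hA : (∑ d ∈ Finset.Ioc ⌊T⌋₊ Nd, 1/(d:ℝ)^2) ≤ 2/T := by
      have := sum_inv_sq_Ioc ⌊T⌋₊ hfT1 Nd
      have hmax : (0:ℝ) ≤ 1/((⌊T⌋₊:ℝ) ⊔ (Nd:ℝ)) := by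
        have : (1:ℝ) ≤ (⌊T⌋₊:ℝ) ⊔ (Nd:ℝ) := le_trans (by exact_mod_cast hfT1) (le_max_left _ _)
        positivity
      calc (∑ d ∈ Finset.Ioc ⌊T⌋₊ Nd, 1/(d:ℝ)^2)
          ≤ 1/(⌊T⌋₊:ℝ) - 1/((⌊T⌋₊:ℝ) ⊔ (Nd:ℝ)) := this
        _ ≤ 1/(⌊T⌋₊:ℝ) := by linarith
        _ ≤ 2/T := hinvT
    have hA0 : (0:ℝ) ≤ ∑ d ∈ Finset.Ioc ⌊T⌋₊ Nd, 1/(d:ℝ)^2 :=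
      Finset.sum_nonneg fun d _ => by positivity
    have hB : (∑ t ∈ Finset.Icc 1 ⌊T⌋₊, 1/(t:ℝ)^2) ≤ 2 := sum_inv_sq_Icc_le_two ⌊T⌋₊
    have hB0 : (0:ℝ) ≤ ∑ t ∈ Finset.Icc 1 ⌊T⌋₊, 1/(t:ℝ)^2 :=
      Finset.sum_nonneg fun t _ => by positivity
    have hG : ((G₁.card):ℝ) ≤ Xh * T := by
      have hcards : G₁.card = (Nd - ⌊T⌋₊) * (⌊T⌋₊ + 1 - 1) := by
        rw [hG₁def, Finset.card_product, Nat.card_Ioc, Nat.card_Icc]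
      have hle : G₁.card ≤ Nd * ⌊T⌋₊ := by
        rw [hcards]
        exact Nat.mul_le_mul (Nat.sub_le _ _) (by omega)
      calc ((G₁.card):ℝ) ≤ ((Nd * ⌊T⌋₊ : ℕ):ℝ) := by exact_mod_cast hle
        _ = (Nd:ℝ) * (⌊T⌋₊:ℝ) := by push_cast; ring
        _ ≤ Xh * T := by
            apply mul_le_mul (Nat.floor_le hXh0) hfTle (by positivity) hXh0
    have hXc0 : (0:ℝ) ≤ Xc := by linarith
    calc ∑ b ∈ G₁, ((F₁.filter fun p => (p.1, p.2.1) = b).card : ℝ)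
        ≤ Xc * ((∑ d ∈ Finset.Ioc ⌊T⌋₊ Nd, 1/(d:ℝ)^2)
            * (∑ t ∈ Finset.Icc 1 ⌊T⌋₊, 1/(t:ℝ)^2)) + (G₁.card:ℝ) * 2 := h1
      _ ≤ Xc * ((2/T) * 2) + (Xh * T) * 2 := by
          have hm1 : (∑ d ∈ Finset.Ioc ⌊T⌋₊ Nd, 1/(d:ℝ)^2)
              * (∑ t ∈ Finset.Icc 1 ⌊T⌋₊, 1/(t:ℝ)^2) ≤ (2/T) * 2 := by
            apply mul_le_mul hA hB hB0 (by positivity)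
          have hm2 : Xc * ((∑ d ∈ Finset.Ioc ⌊T⌋₊ Nd, 1/(d:ℝ)^2)
              * (∑ t ∈ Finset.Icc 1 ⌊T⌋₊, 1/(t:ℝ)^2)) ≤ Xc * ((2/T) * 2) :=
            mul_le_mul_of_nonneg_left hm1 hXc0
          nlinarith [hG]
  -- ========== bound on F₂ ==========
  have hF₂ : (F₂.card : ℝ) ≤ (Xc * (2/T) + (Xh+1) * 2) * (C₁ * X ^ ε) := by
    set g : ℕ×ℕ×ℕ → ℕ×ℕ := fun p => (p.2.1, p.2.2 * p.1^2) with hgdef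
    set G₂ : Finset (ℕ×ℕ) := F₂.image g with hG₂def
    have hmemF₂ : ∀ p ∈ F₂, p ∈ S ∧ ¬((p.2.1:ℝ) ≤ T) := by
      intro p hp
      rw [hF₂def, Finset.mem_filter] at hp
      exact ⟨(hFS p).mp hp.1, hp.2⟩
    have hmap : ∀ p ∈ F₂, g p ∈ G₂ := fun p hp => Finset.mem_image_of_mem g hp
    have hfib : ∀ b ∈ G₂, ((F₂.filter fun p => g p = b).card : ℝ) ≤ C₁ * X ^ ε := by
      rintro ⟨t, m⟩ hb
      rw [hG₂def, Finset.mem_image] at hb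
      obtain ⟨p₀, hp₀, hgp₀⟩ := hb
      obtain ⟨hp₀S, -⟩ := hmemF₂ p₀ hp₀
      have hm : m = p₀.2.2 * p₀.1^2 := (congrArg Prod.snd hgp₀).symm
      have hm1 : 0 < m := by
        obtain ⟨hd0, -, hk0, -⟩ := hp₀S
        rw [hm]
        positivity
      have hmX : (m:ℝ) ≤ Xc := by
        have h := (hkd p₀ hp₀S).1
        rw [hm]
        push_cast
        exact h
      have hsub : ∀ p ∈ F₂.filter (fun p => g p = (t,m)), p.1 ∈ m.divisors := by
        intro p hp
        rw [Finset.mem_filter] at hp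
        have hmp : m = p.2.2 * p.1^2 := (congrArg Prod.snd hp.2).symm
        rw [Nat.mem_divisors]
        exact ⟨⟨p.2.2 * p.1, by rw [hmp]; ring⟩, Nat.pos_iff_ne_zero.mp hm1⟩
      have hinj : Set.InjOn (fun p : ℕ×ℕ×ℕ => p.1) (F₂.filter (fun p => g p = (t,m))) := by
        intro p hp q hq hpq
        rw [Finset.mem_coe, Finset.mem_filter] at hp hq
        have hp2 : p.2.1 = t := congrArg Prod.fst hp.2
        have hq2 : q.2.1 = t := congrArg Prod.fst hq.2
        have hpm : p.2.2 * p.1^2 = m := congrArg Prod.snd hp.2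
        have hqm : q.2.2 * q.1^2 = m := congrArg Prod.snd hq.2
        have hd1 : p.1 = q.1 := hpq
        have h1 : 0 < p.1^2 := by
          have := Nat.pos_of_mem_divisors (hsub p (Finset.mem_filter.mpr hp))
          positivity
        have hk : p.2.2 = q.2.2 := by
          apply Nat.eq_of_mul_eq_mul_right h1
          rw [hpm, hd1, hqm]
        exact Prod.ext hd1 (Prod.ext (hp2.trans hq2.symm) hk)
      have hcount : (F₂.filter (fun p => g p = (t,m))).card ≤ m.divisors.card :=
        Finset.card_le_card_of_injOn _ hsub hinj
      have hXce : Xc ^ (ε/c) = X ^ ε := by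
        rw [hXcdef, ← Real.rpow_mul hX0.le]
        congr 1
        field_simp
      calc ((F₂.filter fun p => g p = (t,m)).card : ℝ)
          ≤ (m.divisors.card : ℝ) := by exact_mod_cast hcount
        _ ≤ C₁ * (m:ℝ) ^ (ε/c) := hdiv m hm1
        _ ≤ C₁ * X ^ ε := by
            rw [← hXce]
            have : (m:ℝ) ^ (ε/c) ≤ Xc ^ (ε/c) :=
              Real.rpow_le_rpow (by positivity) hmX (by positivity)
            exact mul_le_mul_of_nonneg_left this (by linarith)
    -- bound on the number of fibers
    have hmap2 : ∀ b ∈ G₂, b.1 ∈ Finset.Ioc ⌊T⌋₊ Nt := by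
      rintro ⟨t, m⟩ hb
      rw [hG₂def, Finset.mem_image] at hb
      obtain ⟨p, hp, hgp⟩ := hb
      obtain ⟨hpS, hpt⟩ := hmemF₂ p hp
      have hpB := hSB hpS
      simp only [hBoxdef, Finset.coe_product, Set.mem_prod, Finset.mem_coe,
        Finset.mem_Icc] at hpB
      have ht : p.2.1 = t := congrArg Prod.fst hgp
      rw [Finset.mem_Ioc, ← ht]
      push_neg at hpt
      exact ⟨(Nat.floor_lt hT0.le).mpr hpt, hpB.2.1.2⟩
    have hfib2 : ∀ t ∈ Finset.Ioc ⌊T⌋₊ Nt, ((G₂.filter fun b => b.1 = t).card : ℝ)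
        ≤ Xc * (1/(t:ℝ)^2) + 2 := by
      intro t ht
      rw [Finset.mem_Ioc] at ht
      have ht1 : 1 ≤ t := le_trans hfT1 (le_of_lt ht.1)
      have ht0' : (0:ℝ) < (t:ℝ) := by exact_mod_cast lt_of_lt_of_le Nat.zero_lt_one ht1
      have hpre : ∀ b ∈ G₂.filter (fun b => b.1 = t),
          ∃ p ∈ F₂, g p = b := by
        intro b hb
        rw [Finset.mem_filter, hG₂def, Finset.mem_image] at hb
        obtain ⟨⟨p, hp, hgp⟩, -⟩ := hb
        exact ⟨p, hp, hgp⟩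
      have hinj2 : Set.InjOn (fun b : ℕ×ℕ => b.2) (G₂.filter (fun b => b.1 = t)) := by
        intro b hb b' hb' hbb
        rw [Finset.mem_coe, Finset.mem_filter] at hb hb'
        exact Prod.ext (hb.2.trans hb'.2.symm) hbb
      have hcardim : (G₂.filter (fun b => b.1 = t)).card
          = ((G₂.filter (fun b => b.1 = t)).image (fun b => b.2)).card :=
        (Finset.card_image_of_injOn hinj2).symm
      have hbd : (((G₂.filter (fun b => b.1 = t)).image (fun b => b.2)).card : ℝ)
          ≤ (Xc - (X/2)^c)/((t^2 : ℕ):ℝ) + 2 := by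
        apply card_congruent _ (t^2) (by positivity) _ _ (by linarith) hhalf ?_ ?_
        · intro m hm
          rw [Finset.mem_image] at hm
          obtain ⟨b, hb, rfl⟩ := hm
          obtain ⟨p, hp, hgp⟩ := hpre b hb
          obtain ⟨hpS, -⟩ := hmemF₂ p hp
          have hmp : b.2 = p.2.2 * p.1^2 := (congrArg Prod.snd hgp).symm
          obtain ⟨hU, hL⟩ := hkd p hpS
          constructor
          · rw [hmp]; push_cast; exact hL
          · rw [hmp]; push_cast; exact hU
        · intro m hm m' hm'
          rw [Finset.mem_image] at hm hm'
          obtain ⟨b, hb, rfl⟩ := hm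
          obtain ⟨b', hb', rfl⟩ := hm'
          obtain ⟨p, hp, hgp⟩ := hpre b hb
          obtain ⟨p', hp', hgp'⟩ := hpre b' hb'
          have hbt : b.1 = t := (Finset.mem_filter.mp hb).2
          have hbt' : b'.1 = t := (Finset.mem_filter.mp hb').2
          obtain ⟨hpS, -⟩ := hmemF₂ p hp
          obtain ⟨hpS', -⟩ := hmemF₂ p' hp'
          obtain ⟨-, -, -, -, -, -, -, hdvdp, -⟩ := hpS
          obtain ⟨-, -, -, -, -, -, -, hdvdp', -⟩ := hpS'
          have hdp : t^2 ∣ b.2 + 1 := by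
            have h1 : p.2.1 = b.1 := by rw [← hgp]
            have h2 : p.2.2 * p.1^2 = b.2 := by rw [← hgp]
            rw [← hbt, ← h1, ← h2]
            exact hdvdp
          have hdp' : t^2 ∣ b'.2 + 1 := by
            have h1 : p'.2.1 = b'.1 := by rw [← hgp']
            have h2 : p'.2.2 * p'.1^2 = b'.2 := by rw [← hgp']
            rw [← hbt', ← h1, ← h2]
            exact hdvdp'
          have e1 : b.2 + 1 ≡ b'.2 + 1 [MOD t^2] :=
            ((Nat.modEq_zero_iff_dvd).mpr hdp).trans ((Nat.modEq_zero_iff_dvd).mpr hdp').symm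
          exact Nat.ModEq.add_right_cancel' 1 e1
      rw [hcardim]
      refine hbd.trans ?_
      have hcast : ((t^2 : ℕ):ℝ) = (t:ℝ)^2 := by push_cast; ring
      rw [hcast]
      have h1 : (Xc - (X/2)^c)/((t:ℝ)^2) ≤ Xc * (1/(t:ℝ)^2) := by
        rw [div_le_iff₀ (by positivity)]
        have h3 : Xc * (1/(t:ℝ)^2) * (t:ℝ)^2 = Xc := by field_simp
        rw [h3]
        linarith
      linarith
    have e2 := Finset.card_eq_sum_card_fiberwise hmap2
    have e2cast : ((G₂.card):ℝ) = ∑ t ∈ Finset.Ioc ⌊T⌋₊ Nt,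
        ((G₂.filter fun b => b.1 = t).card : ℝ) := by
      rw [e2]; push_cast; rfl
    have hG₂card : ((G₂.card):ℝ) ≤ Xc * (2/T) + (Xh+1) * 2 := by
      rw [e2cast]
      have h1 : ∑ t ∈ Finset.Ioc ⌊T⌋₊ Nt, ((G₂.filter fun b => b.1 = t).card : ℝ)
          ≤ ∑ t ∈ Finset.Ioc ⌊T⌋₊ Nt, (Xc * (1/(t:ℝ)^2) + 2) := Finset.sum_le_sum hfib2
      rw [Finset.sum_add_distrib, Finset.sum_const, nsmul_eq_mul, ← Finset.mul_sum] at h1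
      have hA : (∑ t ∈ Finset.Ioc ⌊T⌋₊ Nt, 1/(t:ℝ)^2) ≤ 2/T := by
        have := sum_inv_sq_Ioc ⌊T⌋₊ hfT1 Nt
        have hmax : (0:ℝ) ≤ 1/((⌊T⌋₊:ℝ) ⊔ (Nt:ℝ)) := by
          have : (1:ℝ) ≤ (⌊T⌋₊:ℝ) ⊔ (Nt:ℝ) :=
            le_trans (by exact_mod_cast hfT1) (le_max_left _ _)
          positivity
        calc (∑ t ∈ Finset.Ioc ⌊T⌋₊ Nt, 1/(t:ℝ)^2)
            ≤ 1/(⌊T⌋₊:ℝ) - 1/((⌊T⌋₊:ℝ) ⊔ (Nt:ℝ)) := this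
          _ ≤ 1/(⌊T⌋₊:ℝ) := by linarith
          _ ≤ 2/T := hinvT
      have hNt : ((Finset.Ioc ⌊T⌋₊ Nt).card : ℝ) ≤ Xh + 1 := by
        have h2 : (Finset.Ioc ⌊T⌋₊ Nt).card ≤ Nt := by
          rw [Nat.card_Ioc]; omega
        calc ((Finset.Ioc ⌊T⌋₊ Nt).card : ℝ) ≤ (Nt:ℝ) := by exact_mod_cast h2
          _ ≤ Xh + 1 := Nat.floor_le (by linarith)
      have hXc0 : (0:ℝ) ≤ Xc := by linarith
      calc ∑ t ∈ Finset.Ioc ⌊T⌋₊ Nt, ((G₂.filter fun b => b.1 = t).card : ℝ)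
          ≤ Xc * (∑ t ∈ Finset.Ioc ⌊T⌋₊ Nt, 1/(t:ℝ)^2)
            + ((Finset.Ioc ⌊T⌋₊ Nt).card : ℝ) * 2 := h1
        _ ≤ Xc * (2/T) + (Xh+1) * 2 := by
            have := mul_le_mul_of_nonneg_left hA hXc0
            nlinarith [hNt]
    have ecast : ((F₂.card):ℝ) = ∑ b ∈ G₂, ((F₂.filter fun p => g p = b).card : ℝ) := by
      rw [Finset.card_eq_sum_card_fiberwise hmap]; push_cast; rfl
    rw [ecast]
    have hG₂0 : (0:ℝ) ≤ (G₂.card:ℝ) := by positivity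
    calc ∑ b ∈ G₂, ((F₂.filter fun p => g p = b).card : ℝ)
        ≤ ∑ b ∈ G₂, (C₁ * X ^ ε) := Finset.sum_le_sum hfib
      _ = (G₂.card:ℝ) * (C₁ * X ^ ε) := by rw [Finset.sum_const, nsmul_eq_mul]
      _ ≤ (Xc * (2/T) + (Xh+1) * 2) * (C₁ * X ^ ε) := by
          apply mul_le_mul_of_nonneg_right hG₂card
          have : (1:ℝ) ≤ X ^ ε := Real.one_le_rpow hX1 hε.le
          positivity
  -- ========== final assembly ==========
  set E : ℝ := X ^ ((6*c+1)/8) with hEdef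
  have hE1 : (1:ℝ) ≤ E := Real.one_le_rpow hX1 (by positivity)
  have hXε : (1:ℝ) ≤ X ^ ε := Real.one_le_rpow hX1 hε.le
  have hXcT : Xc / T = E := by
    rw [hXcdef, hTdef, hEdef, ← Real.rpow_sub hX0]
    congr 1
    ring
  have hXhT : Xh * T ≤ E := by
    rw [hXhdef, hTdef, ← Real.rpow_add hX0]
    apply Real.rpow_le_rpow_of_exponent_le hX1
    linarith
  have hXhE : Xh ≤ E := by
    rw [hXhdef, hEdef]
    apply Real.rpow_le_rpow_of_exponent_le hX1
    linarith
  have hEXε : E * X ^ ε = X ^ ((6*c+1)/8 + ε) := by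
    rw [hEdef, ← Real.rpow_add hX0]
  have hT1' : Xc * (2/T) = 2 * E := by
    rw [← hXcT]
    ring
  have hcardF : ((F.card):ℝ) = ((F₁.card):ℝ) + ((F₂.card):ℝ) := by
    rw [hsplit]; push_cast; ring
  rw [hcardF]
  have hF₁' : ((F₁.card):ℝ) ≤ 6 * E := by
    refine hF₁.trans ?_
    have e1 : Xc * ((2/T) * 2) = 4 * E := by
      rw [show Xc * ((2/T) * 2) = (Xc * (2/T)) * 2 by ring, hT1']
      ring
    rw [e1]
    linarith
  have hF₂' : ((F₂.card):ℝ) ≤ 6 * E * (C₁ * X ^ ε) := by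
    refine hF₂.trans ?_
    have h1 : Xc * (2/T) + (Xh+1) * 2 ≤ 6 * E := by
      rw [hT1']
      linarith
    apply mul_le_mul_of_nonneg_right h1
    positivity
  have hEE : 6 * E ≤ 6 * E * X ^ ε := by nlinarith
  calc ((F₁.card):ℝ) + ((F₂.card):ℝ) ≤ 6 * E * X ^ ε + 6 * E * (C₁ * X ^ ε) := by linarith
    _ = (6 + 6 * C₁) * (E * X ^ ε) := by ring
    _ = (6 + 6 * C₁) * X ^ ((6*c+1)/8 + ε) := by rw [hEXε]
    _ = (6 + 6 * C₁) * X ^ ((6 * c + 1) / 8 + ε) := rfl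
end
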